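/- Let 0 < α < 1, b > 0, J = [0,b]. Let ψ : J → ℝ be increasing and continuously differentiable with ψ'(z) > 0 for all z ∈ J. Let F : J × ℝ × ℝ → ℝ and H : J × J × ℝ → ℝ be continuous, let ϑ₀ ∈ ℝ, and let ϑ : J → ℝ be continuously differentiable. Then ϑ satisfies N^{α,ψ}ϑ(z) = F(z, ϑ(z), (1/Γ(α)) ∫₀^z ψ'(τ)(ψ(z) − ψ(τ))^{α−1} H(z, τ, N^{α,ψ}ϑ(τ)) dτ) for all z ∈ J together with ϑ(0) = ϑ₀, if and only if ϑ satisfies the integral equation ϑ(z) = ϑ₀ + (1/Γ(α)) ∫₀^z ψ'(κ)(ψ(z) − ψ(κ))^{α−1} F(κ, ϑ(κ), (1/Γ(α)) ∫₀^κ ψ'(τ)(ψ(κ) − ψ(τ))^{α−1} H(κ, τ, N^{α,ψ}ϑ(τ)) dτ) dκ for all z ∈ J. -/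

import Mathlib

/-!
Substituting `u = ψ κ` turns ψ-fractional integrals into Riemann–Liouville integrals, so Dirichlet's
formula on the triangle `0 < τ < κ < z` and the Beta integral give the semigroup law
`I^β (I^γ h) = I^(β+γ) h`, where `I^1 h (z) = ∫₀^z ψ' h`. As `N^α v = I^(1-α) (v' / ψ')`, this
yields `I^α (N^α v) = v - v 0`, which is the forward implication. Conversely, the integral
equation says `I^α (N^α v) = I^α g` for the right-hand side `g` of the problem; applying `I^(1-α)`
gives `∫₀^z ψ' N^α v = ∫₀^z ψ' g` for all `z`, and differentiating gives `N^α v = g`. This last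
step needs `N^α v` and `g` to be continuous, which follows from the Hölder bound
`|I^β f y₂ - I^β f y₁| ≤ 2 ‖f‖ (ψ y₂ - ψ y₁)^β / Γ(β + 1)` for `β ≤ 1`.
-/

open MeasureTheory Set

/-- ψ-Riemann–Liouville fractional integral of order `α` of `f` with respect to `ψ`
(with `ψ'` a given derivative function of `ψ`):
`I^{α,ψ} f (z) = (1/Γ(α)) ∫₀^z ψ'(κ) (ψ(z) - ψ(κ))^(α-1) f(κ) dκ`. -/
noncomputable def psiInt (α : ℝ) (ψ ψ' f : ℝ → ℝ) (z : ℝ) : ℝ :=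
  (1 / Real.Gamma α) * ∫ κ in (0:ℝ)..z, ψ' κ * (ψ z - ψ κ) ^ (α - 1) * f κ

/-- ψ-Caputo fractional derivative of order `α` (for `0 < α < 1`) of a function with
derivative `v'`, with respect to `ψ` (with derivative `ψ'`):
`N^{α,ψ} v (z) = (1/Γ(1-α)) ∫₀^z ψ'(κ) (ψ(z) - ψ(κ))^(-α) (v'(κ)/ψ'(κ)) dκ`. -/
noncomputable def psiCaputo (α : ℝ) (ψ ψ' v' : ℝ → ℝ) (z : ℝ) : ℝ :=
  (1 / Real.Gamma (1 - α)) * ∫ κ in (0:ℝ)..z, ψ' κ * (ψ z - ψ κ) ^ (-α) * (v' κ / ψ' κ)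

/-- Mittag-Leffler function `E_α(x) = ∑_{m=0}^∞ x^m / Γ(α m + 1)`. -/
noncomputable def mittagLeffler (α x : ℝ) : ℝ :=
  ∑' m : ℕ, x ^ m / Real.Gamma (α * m + 1)

open Filter Topology

theorem integral_sub_rpow_mul_rpow_sub {β γ c d : ℝ} (hβ : 0 < β) (hγ : 0 < γ) (hcd : c < d) :
    ∫ u in c..d, (d - u) ^ (β - 1) * (u - c) ^ (γ - 1) =
      Real.Gamma β * Real.Gamma γ / Real.Gamma (β + γ) * (d - c) ^ (β + γ - 1) := by
  have hshift := intervalIntegral.integral_comp_add_right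
    (fun u => (d - u) ^ (β - 1) * (u - c) ^ (γ - 1)) (a := 0) (b := d - c) c
  simp only [zero_add, sub_add_cancel, add_sub_cancel_right, sub_add_eq_sub_sub,
    sub_right_comm d _ c] at hshift
  rw [← hshift]
  generalize ha : d - c = a
  replace ha : 0 < a := by linarith
  have hΓ := Complex.Gamma_mul_Gamma_eq_betaIntegral (s := γ) (t := β) (by simpa) (by simpa)
  rw [← Complex.ofReal_add, Complex.Gamma_ofReal, Complex.Gamma_ofReal, Complex.Gamma_ofReal]
    at hΓ
  apply Complex.ofReal_injective
  rw [← intervalIntegral.integral_ofReal, Complex.ofReal_mul, Complex.ofReal_div,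
    Complex.ofReal_mul, add_comm β, mul_comm (Real.Gamma β : ℂ), hΓ, mul_div_cancel_left₀ _
      (by exact_mod_cast (Real.Gamma_pos_of_pos (by linarith)).ne'),
    Complex.ofReal_cpow ha.le, mul_comm]
  push_cast
  rw [← Complex.betaIntegral_scaled γ β ha]
  refine intervalIntegral.integral_congr fun x hx => ?_
  rw [uIcc_of_le ha.le] at hx
  simp only [Complex.ofReal_cpow hx.1,
    Complex.ofReal_cpow (by linarith [hx.2] : 0 ≤ a - x)]
  push_cast
  ring

theorem abs_integral_mul_le {g f : ℝ → ℝ} {s t M : ℝ} (hst : s ≤ t)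
    (hg : IntervalIntegrable g volume s t)
    (hgf : IntervalIntegrable (fun x => g x * f x) volume s t)
    (hg0 : ∀ x ∈ Ioo s t, 0 ≤ g x) (hf : ∀ x ∈ Ioo s t, |f x| ≤ M) :
    |∫ x in s..t, g x * f x| ≤ M * ∫ x in s..t, g x := by
  rw [← intervalIntegral.integral_const_mul]
  refine (intervalIntegral.abs_integral_le_integral_abs hst).trans
    (intervalIntegral.integral_mono_on_of_le_Ioo hst hgf.abs (hg.const_mul M) fun x hx => ?_)
  rw [abs_mul, abs_of_nonneg (hg0 x hx), mul_comm]
  exact mul_le_mul_of_nonneg_right (hf x hx) (hg0 x hx)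

theorem psiInt_one (ψ ψ' f : ℝ → ℝ) (z : ℝ) :
    psiInt 1 ψ ψ' f z = ∫ κ in (0:ℝ)..z, ψ' κ * f κ := by
  simp [psiInt]

theorem psiCaputo_eq_psiInt (α : ℝ) (ψ ψ' v' : ℝ → ℝ) :
    psiCaputo α ψ ψ' v' = psiInt (1 - α) ψ ψ' (fun κ => v' κ / ψ' κ) := by
  funext z
  simp only [psiCaputo, psiInt, sub_sub_cancel_left]

theorem psiInt_congr {β : ℝ} {ψ ψ' f g : ℝ → ℝ} {z : ℝ} (hz : 0 ≤ z) (hfg : EqOn f g (Icc 0 z)) :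
    psiInt β ψ ψ' f z = psiInt β ψ ψ' g z := by
  simp only [psiInt]
  congr 1
  refine intervalIntegral.integral_congr fun κ hκ => ?_
  rw [hfg (uIcc_of_le hz ▸ hκ)]

theorem eqOn_of_integral_eq {p q : ℝ → ℝ} {b : ℝ} (hb : 0 < b) (hp : ContinuousOn p (Icc 0 b))
    (hq : ContinuousOn q (Icc 0 b))
    (h : ∀ z ∈ Icc 0 b, ∫ x in (0:ℝ)..z, p x = ∫ x in (0:ℝ)..z, q x) :
    EqOn p q (Icc 0 b) := by
  have hIoo : EqOn p q (Ioo 0 b) := fun z hz => by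
    have hnhds : Icc 0 b ∈ 𝓝 z := Icc_mem_nhds hz.1 hz.2
    have hderiv {f : ℝ → ℝ} (hf : ContinuousOn f (Icc 0 b)) :
        HasDerivAt (fun u => ∫ x in (0:ℝ)..u, f x) (f z) z :=
      intervalIntegral.integral_hasDerivAt_right
        (hf.mono (uIcc_of_le hz.1.le ▸ Icc_subset_Icc le_rfl hz.2.le)).intervalIntegrable
        ((hf.mono Ioo_subset_Icc_self).stronglyMeasurableAtFilter isOpen_Ioo z hz)
        (hf.continuousAt hnhds)
    exact (hderiv hp).unique ((hderiv hq).congr_of_eventuallyEq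
      (eventually_of_mem hnhds fun u hu => h u hu))
  exact hIoo.of_subset_closure hp hq Ioo_subset_Icc_self (closure_Ioo hb.ne).ge

/-- Open, so that kernels that are singular on its boundary are continuous on it. -/
def triangle (a z : ℝ) : Set (ℝ × ℝ) := {p | a < p.2 ∧ p.2 < p.1 ∧ p.1 < z}

section Triangle

variable {a z : ℝ}

theorem measurableSet_triangle : MeasurableSet (triangle a z) :=
  (measurableSet_lt measurable_const measurable_snd).inter
    ((measurableSet_lt measurable_snd measurable_fst).inter
      (measurableSet_lt measurable_fst measurable_const))

theorem indicator_triangle_left (Φ : ℝ × ℝ → ℝ) (κ τ : ℝ) :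
    (triangle a z).indicator Φ (κ, τ) =
      (Ioo a z).indicator (fun κ => (Ioo a κ).indicator (fun τ => Φ (κ, τ)) τ) κ := by
  simp only [indicator, triangle, mem_ofPred_eq, mem_Ioo]
  split_ifs <;> first | rfl | grind

theorem indicator_triangle_right (Φ : ℝ × ℝ → ℝ) (κ τ : ℝ) :
    (triangle a z).indicator Φ (κ, τ) =
      (Ioo a z).indicator (fun τ => (Ioo τ z).indicator (fun κ => Φ (κ, τ)) κ) τ := by
  simp only [indicator, triangle, mem_ofPred_eq, mem_Ioo]
  split_ifs <;> first | rfl | grind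

theorem integral_indicator_triangle_left (Φ : ℝ × ℝ → ℝ) (κ : ℝ) :
    ∫ τ, (triangle a z).indicator Φ (κ, τ) =
      (Ioo a z).indicator (fun κ => ∫ τ in Ioo a κ, Φ (κ, τ)) κ := by
  simp_rw [indicator_triangle_left]
  by_cases hκ : κ ∈ Ioo a z <;> simp [hκ, integral_indicator measurableSet_Ioo]

theorem integral_indicator_triangle_right (Φ : ℝ × ℝ → ℝ) (τ : ℝ) :
    ∫ κ, (triangle a z).indicator Φ (κ, τ) =
      (Ioo a z).indicator (fun τ => ∫ κ in Ioo τ z, Φ (κ, τ)) τ := by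
  simp_rw [indicator_triangle_right]
  by_cases hτ : τ ∈ Ioo a z <;> simp [hτ, integral_indicator measurableSet_Ioo]

theorem integral_integral_swap_triangle {F : ℝ → ℝ → ℝ}
    (hF : IntegrableOn (Function.uncurry F) (triangle a z)) :
    ∫ κ in Ioo a z, ∫ τ in Ioo a κ, F κ τ = ∫ τ in Ioo a z, ∫ κ in Ioo τ z, F κ τ := by
  simpa only [integral_indicator_triangle_left, integral_indicator_triangle_right,
    integral_indicator measurableSet_Ioo, Function.uncurry_apply_pair] using
    integral_integral_swap (f := fun κ τ => (triangle a z).indicator (Function.uncurry F) (κ, τ))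
      ((integrable_indicator_iff measurableSet_triangle).2 hF)

theorem integrableOn_triangle {F : ℝ → ℝ → ℝ} {g : ℝ → ℝ}
    (hF : ContinuousOn (Function.uncurry F) (triangle a z))
    (hsec : ∀ κ ∈ Ioo a z, IntegrableOn (F κ) (Ioo a κ)) (hg : IntegrableOn g (Ioo a z))
    (hbound : ∀ κ ∈ Ioo a z, ∫ τ in Ioo a κ, ‖F κ τ‖ ≤ g κ) :
    IntegrableOn (Function.uncurry F) (triangle a z) := by
  have hmeas : AEStronglyMeasurable ((triangle a z).indicator (Function.uncurry F))
      ((volume : Measure ℝ).prod volume) :=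
    (aestronglyMeasurable_indicator_iff measurableSet_triangle).2
      (hF.aestronglyMeasurable measurableSet_triangle)
  rw [← integrable_indicator_iff measurableSet_triangle, Measure.volume_eq_prod,
    integrable_prod_iff hmeas]
  refine ⟨ae_of_all _ fun κ => ?_, ?_⟩
  · simp_rw [indicator_triangle_left]
    by_cases hκ : κ ∈ Ioo a z
    · simpa [hκ, integrable_indicator_iff measurableSet_Ioo] using hsec κ hκ
    · simp [hκ]
  · refine ((integrable_indicator_iff measurableSet_Ioo).2 hg).mono
      hmeas.norm.integral_prod_right' (ae_of_all _ fun κ => ?_)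
    simp_rw [norm_indicator_eq_indicator_norm]
    rw [integral_indicator_triangle_left]
    by_cases hκ : κ ∈ Ioo a z
    · simp only [indicator_of_mem hκ, Function.uncurry_apply_pair]
      rw [Real.norm_of_nonneg (integral_nonneg fun _ => norm_nonneg _)]
      exact (hbound κ hκ).trans (Real.le_norm_self _)
    · simp [hκ]

end Triangle

structure IsPsiScale (ψ ψ' : ℝ → ℝ) (b : ℝ) : Prop where
  strictMonoOn : StrictMonoOn ψ (Icc 0 b)
  hasDerivWithinAt : ∀ z ∈ Icc 0 b, HasDerivWithinAt ψ (ψ' z) (Icc 0 b) z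
  deriv_pos : ∀ z ∈ Icc 0 b, 0 < ψ' z

namespace IsPsiScale

variable {ψ ψ' : ℝ → ℝ} {b : ℝ}

theorem continuousOn (hψ : IsPsiScale ψ ψ' b) : ContinuousOn ψ (Icc 0 b) :=
  fun z hz => (hψ.hasDerivWithinAt z hz).continuousWithinAt

theorem hasDerivAt (hψ : IsPsiScale ψ ψ' b) {z : ℝ} (hz : z ∈ Ioo 0 b) : HasDerivAt ψ (ψ' z) z :=
  (hψ.hasDerivWithinAt z (Ioo_subset_Icc_self hz)).hasDerivAt (Icc_mem_nhds hz.1 hz.2)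

theorem sub_apply_pos (hψ : IsPsiScale ψ ψ' b) {s t : ℝ} (hs : 0 ≤ s) (hst : s < t) (ht : t ≤ b) :
    0 < ψ t - ψ s :=
  sub_pos.2 (hψ.strictMonoOn ⟨hs, hst.le.trans ht⟩ ⟨hs.trans hst.le, ht⟩ hst)

theorem sub_apply_nonneg (hψ : IsPsiScale ψ ψ' b) {s t : ℝ} (hs : 0 ≤ s) (hst : s ≤ t)
    (ht : t ≤ b) :
    0 ≤ ψ t - ψ s :=
  sub_nonneg.2 (hψ.strictMonoOn.monotoneOn ⟨hs, hst.trans ht⟩ ⟨hs.trans hst, ht⟩ hst)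

theorem integral_comp (hψ : IsPsiScale ψ ψ' b) {s t : ℝ} (hs : 0 ≤ s) (hst : s ≤ t) (ht : t ≤ b)
    (G : ℝ → ℝ) : ∫ κ in s..t, ψ' κ * G (ψ κ) = ∫ u in ψ s..ψ t, G u := by
  have hsub : Ioo s t ⊆ Ioo 0 b := Ioo_subset_Ioo hs ht
  simp_rw [mul_comm (ψ' _)]
  refine intervalIntegral.integral_comp_mul_deriv_of_deriv_nonneg
    (hψ.continuousOn.mono (uIcc_of_le hst ▸ Icc_subset_Icc hs ht)) (fun x hx => ?_)
    (fun x hx => ?_)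
  all_goals rw [min_eq_left hst, max_eq_right hst] at hx
  · exact hψ.hasDerivAt (hsub hx)
  · exact (hψ.deriv_pos x (Ioo_subset_Icc_self (hsub hx))).le

theorem intervalIntegrable_comp (hψ : IsPsiScale ψ ψ' b) {s t : ℝ} (hs : 0 ≤ s) (hst : s ≤ t)
    (ht : t ≤ b) {G : ℝ → ℝ} (hG : IntervalIntegrable G volume (ψ s) (ψ t)) :
    IntervalIntegrable (fun κ => ψ' κ * G (ψ κ)) volume s t := by
  have hsub : Ioo s t ⊆ Ioo 0 b := Ioo_subset_Ioo hs ht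
  simp_rw [mul_comm (ψ' _)]
  refine (intervalIntegral.integrable_comp_mul_deriv_iff_of_deriv_nonneg
    (hψ.continuousOn.mono (uIcc_of_le hst ▸ Icc_subset_Icc hs ht)) (fun x hx => ?_)
    (fun x hx => ?_)).2 hG
  all_goals rw [min_eq_left hst, max_eq_right hst] at hx
  · exact hψ.hasDerivAt (hsub hx)
  · exact (hψ.deriv_pos x (Ioo_subset_Icc_self (hsub hx))).le

theorem intervalIntegrable_kernel_mul (hψ : IsPsiScale ψ ψ' b) {β : ℝ} (hβ : 0 < β)
    {s t y : ℝ} (hs : 0 ≤ s) (hst : s ≤ t) (hty : t ≤ y) (hy : y ≤ b) {f : ℝ → ℝ}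
    (hf : ContinuousOn f (Icc s t)) :
    IntervalIntegrable (fun τ => ψ' τ * (ψ y - ψ τ) ^ (β - 1) * f τ) volume s t := by
  have hG : IntervalIntegrable (fun u => (ψ y - u) ^ (β - 1)) volume (ψ s) (ψ t) := by
    simpa using (intervalIntegral.intervalIntegrable_rpow' (a := ψ y - ψ s) (b := ψ y - ψ t)
      (by linarith : (-1:ℝ) < β - 1)).comp_sub_left (ψ y)
  exact (hψ.intervalIntegrable_comp hs hst (hty.trans hy) hG).mul_continuousOn
    (uIcc_of_le hst ▸ hf)

theorem integral_kernel (hψ : IsPsiScale ψ ψ' b) {β : ℝ} (hβ : 0 < β) {s t y : ℝ} (hs : 0 ≤ s)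
    (hst : s ≤ t) (hty : t ≤ y) (hy : y ≤ b) :
    ∫ τ in s..t, ψ' τ * (ψ y - ψ τ) ^ (β - 1) = ((ψ y - ψ s) ^ β - (ψ y - ψ t) ^ β) / β := by
  rw [hψ.integral_comp hs hst (hty.trans hy) (fun u => (ψ y - u) ^ (β - 1)),
    intervalIntegral.integral_comp_sub_left (fun x => x ^ (β - 1)) (ψ y),
    integral_rpow (Or.inl (by linarith)), sub_add_cancel]

theorem integral_beta_kernel (hψ : IsPsiScale ψ ψ' b) {β γ : ℝ} (hβ : 0 < β) (hγ : 0 < γ)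
    {τ z : ℝ} (hτ : 0 ≤ τ) (hτz : τ < z) (hz : z ≤ b) :
    ∫ κ in τ..z, ψ' κ * ((ψ z - ψ κ) ^ (β - 1) * (ψ κ - ψ τ) ^ (γ - 1)) =
      Real.Gamma β * Real.Gamma γ / Real.Gamma (β + γ) * (ψ z - ψ τ) ^ (β + γ - 1) := by
  rw [hψ.integral_comp hτ hτz.le hz (fun u => (ψ z - u) ^ (β - 1) * (u - ψ τ) ^ (γ - 1))]
  exact integral_sub_rpow_mul_rpow_sub hβ hγ (sub_pos.1 (hψ.sub_apply_pos hτ hτz hz))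

theorem kernel_nonneg (hψ : IsPsiScale ψ ψ' b) (β : ℝ) {τ y : ℝ} (hτ : 0 ≤ τ) (hτy : τ ≤ y)
    (hy : y ≤ b) : 0 ≤ ψ' τ * (ψ y - ψ τ) ^ (β - 1) :=
  mul_nonneg (hψ.deriv_pos τ ⟨hτ, hτy.trans hy⟩).le
    (Real.rpow_nonneg (hψ.sub_apply_nonneg hτ hτy hy) _)

theorem abs_integral_kernel_mul_le (hψ : IsPsiScale ψ ψ' b) {β : ℝ} (hβ : 0 < β) {s t y : ℝ}
    (hs : 0 ≤ s) (hst : s ≤ t) (hty : t ≤ y) (hy : y ≤ b) {f : ℝ → ℝ}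
    (hf : ContinuousOn f (Icc s t)) {M : ℝ} (hM : ∀ x ∈ Ioo s t, |f x| ≤ M) :
    |∫ τ in s..t, ψ' τ * (ψ y - ψ τ) ^ (β - 1) * f τ| ≤
      M * (((ψ y - ψ s) ^ β - (ψ y - ψ t) ^ β) / β) := by
  rw [← hψ.integral_kernel hβ hs hst hty hy]
  refine abs_integral_mul_le hst ?_ (hψ.intervalIntegrable_kernel_mul hβ hs hst hty hy hf)
    (fun τ hτ => hψ.kernel_nonneg β (hs.trans hτ.1.le) (hτ.2.le.trans hty) hy) hM
  simpa using hψ.intervalIntegrable_kernel_mul hβ hs hst hty hy (f := fun _ => 1)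
    continuousOn_const

theorem abs_integral_kernel_sub_kernel_mul_le (hψ : IsPsiScale ψ ψ' b) {β : ℝ} (hβ0 : 0 < β)
    (hβ1 : β ≤ 1) {y₁ y₂ : ℝ} (h1 : 0 ≤ y₁) (h12 : y₁ ≤ y₂) (h2 : y₂ ≤ b) {f : ℝ → ℝ}
    (hf : ContinuousOn f (Icc 0 y₁)) {M : ℝ} (hM0 : 0 ≤ M) (hM : ∀ x ∈ Ioo 0 y₁, |f x| ≤ M) :
    |∫ τ in (0:ℝ)..y₁, (ψ' τ * (ψ y₁ - ψ τ) ^ (β - 1) - ψ' τ * (ψ y₂ - ψ τ) ^ (β - 1)) * f τ| ≤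
      M * (ψ y₂ - ψ y₁) ^ β / β := by
  have hk {y : ℝ} (hy₁ : y₁ ≤ y) (hy : y ≤ b) := hψ.intervalIntegrable_kernel_mul hβ0 le_rfl h1
    hy₁ hy (f := fun _ => 1) continuousOn_const
  have hkf {y : ℝ} (hy₁ : y₁ ≤ y) (hy : y ≤ b) :=
    hψ.intervalIntegrable_kernel_mul hβ0 le_rfl h1 hy₁ hy hf
  simp only [mul_one] at hk
  refine (abs_integral_mul_le h1 ((hk le_rfl (h12.trans h2)).sub (hk h12 h2))
    (by simpa only [sub_mul] using (hkf le_rfl (h12.trans h2)).sub (hkf h12 h2))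
    (fun τ hτ => ?_) hM).trans ?_
  -- Only on `Ioo`: at `τ = y₁` the first kernel takes the junk value `0 ^ (β - 1) = 0`.
  · have hτ₁ := hψ.sub_apply_pos hτ.1.le hτ.2 (h12.trans h2)
    have h₁₂ := hψ.sub_apply_nonneg h1 h12 h2
    exact sub_nonneg.2 (mul_le_mul_of_nonneg_left
      (Real.rpow_le_rpow_of_nonpos hτ₁ (by linarith) (by linarith))
      (hψ.deriv_pos τ ⟨hτ.1.le, hτ.2.le.trans (h12.trans h2)⟩).le)
  · rw [intervalIntegral.integral_sub (hk le_rfl (h12.trans h2)) (hk h12 h2),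
      hψ.integral_kernel hβ0 le_rfl h1 le_rfl (h12.trans h2),
      hψ.integral_kernel hβ0 le_rfl h1 h12 h2, sub_self, Real.zero_rpow hβ0.ne', sub_zero,
      div_sub_div_same, mul_div_assoc]
    have : (ψ y₁ - ψ 0) ^ β ≤ (ψ y₂ - ψ 0) ^ β :=
      Real.rpow_le_rpow (hψ.sub_apply_nonneg le_rfl h1 (h12.trans h2))
        (by linarith [hψ.sub_apply_nonneg h1 h12 h2]) hβ0.le
    gcongr
    linarith

theorem abs_integral_kernel_sub_le (hψ : IsPsiScale ψ ψ' b) {β : ℝ} (hβ0 : 0 < β) (hβ1 : β ≤ 1)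
    {f : ℝ → ℝ} (hf : ContinuousOn f (Icc 0 b)) {M : ℝ} (hM : ∀ x ∈ Icc 0 b, |f x| ≤ M)
    {y₁ y₂ : ℝ} (h1 : 0 ≤ y₁) (h12 : y₁ ≤ y₂) (h2 : y₂ ≤ b) :
    |(∫ τ in (0:ℝ)..y₂, ψ' τ * (ψ y₂ - ψ τ) ^ (β - 1) * f τ) -
      ∫ τ in (0:ℝ)..y₁, ψ' τ * (ψ y₁ - ψ τ) ^ (β - 1) * f τ| ≤
      2 * M * (ψ y₂ - ψ y₁) ^ β / β := by
  have hkf {s t y : ℝ} (hs : 0 ≤ s) (hst : s ≤ t) (hty : t ≤ y) (hy : y ≤ b) :=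
    hψ.intervalIntegrable_kernel_mul hβ0 hs hst hty hy (hf.mono (Icc_subset_Icc hs (hty.trans hy)))
  have hnear := hψ.abs_integral_kernel_mul_le hβ0 h1 h12 le_rfl h2
    (hf.mono (Icc_subset_Icc h1 h2)) fun x hx => hM x ⟨h1.trans hx.1.le, hx.2.le.trans h2⟩
  rw [sub_self, Real.zero_rpow hβ0.ne', sub_zero] at hnear
  have hfar := hψ.abs_integral_kernel_sub_kernel_mul_le hβ0 hβ1 h1 h12 h2
    (hf.mono (Icc_subset_Icc le_rfl (h12.trans h2)))
    ((abs_nonneg _).trans (hM 0 ⟨le_rfl, h1.trans (h12.trans h2)⟩))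
    fun x hx => hM x ⟨hx.1.le, hx.2.le.trans (h12.trans h2)⟩
  have hsplit : (∫ τ in (0:ℝ)..y₂, ψ' τ * (ψ y₂ - ψ τ) ^ (β - 1) * f τ) -
      ∫ τ in (0:ℝ)..y₁, ψ' τ * (ψ y₁ - ψ τ) ^ (β - 1) * f τ =
      (∫ τ in y₁..y₂, ψ' τ * (ψ y₂ - ψ τ) ^ (β - 1) * f τ) -
      ∫ τ in (0:ℝ)..y₁,
        (ψ' τ * (ψ y₁ - ψ τ) ^ (β - 1) - ψ' τ * (ψ y₂ - ψ τ) ^ (β - 1)) * f τ := by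
    simp only [sub_mul]
    rw [← intervalIntegral.integral_add_adjacent_intervals (hkf le_rfl h1 h12 h2)
      (hkf h1 h12 le_rfl h2), intervalIntegral.integral_sub
      (hkf le_rfl h1 le_rfl (h12.trans h2)) (hkf le_rfl h1 h12 h2)]
    ring
  rw [hsplit]
  calc _ ≤ _ := abs_sub _ _
    _ ≤ _ := add_le_add hnear hfar
    _ = _ := by ring

theorem continuousOn_integral_kernel (hψ : IsPsiScale ψ ψ' b) {β : ℝ} (hβ0 : 0 < β)
    (hβ1 : β ≤ 1) {f : ℝ → ℝ} (hf : ContinuousOn f (Icc 0 b)) :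
    ContinuousOn (fun y => ∫ τ in (0:ℝ)..y, ψ' τ * (ψ y - ψ τ) ^ (β - 1) * f τ) (Icc 0 b) := by
  obtain ⟨M, hM⟩ := isCompact_Icc.exists_bound_of_continuousOn hf
  simp only [Real.norm_eq_abs] at hM
  intro y₀ hy₀
  have hbound : ∀ y ∈ Icc 0 b, dist (∫ τ in (0:ℝ)..y, ψ' τ * (ψ y - ψ τ) ^ (β - 1) * f τ)
      (∫ τ in (0:ℝ)..y₀, ψ' τ * (ψ y₀ - ψ τ) ^ (β - 1) * f τ) ≤
      2 * M * |ψ y - ψ y₀| ^ β / β := by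
    intro y hy
    rcases le_total y y₀ with h | h
    · rw [dist_comm, Real.dist_eq, abs_sub_comm (ψ y),
        abs_of_nonneg (hψ.sub_apply_nonneg hy.1 h hy₀.2)]
      exact hψ.abs_integral_kernel_sub_le hβ0 hβ1 hf hM hy.1 h hy₀.2
    · rw [Real.dist_eq, abs_of_nonneg (hψ.sub_apply_nonneg hy₀.1 h hy.2)]
      exact hψ.abs_integral_kernel_sub_le hβ0 hβ1 hf hM hy₀.1 h hy.2
  have hψlim : Tendsto (fun y => ψ y - ψ y₀) (𝓝[Icc 0 b] y₀) (𝓝 0) := by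
    simpa using (hψ.continuousOn y₀ hy₀).sub_const (ψ y₀)
  have hlim : Tendsto (fun y => 2 * M * |ψ y - ψ y₀| ^ β / β) (𝓝[Icc 0 b] y₀) (𝓝 0) := by
    simpa [Real.zero_rpow hβ0.ne'] using
      ((hψlim.abs.rpow_const (Or.inr hβ0.le)).const_mul (2 * M)).div_const β
  exact tendsto_iff_dist_tendsto_zero.2 (squeeze_zero' (Eventually.of_forall fun _ => dist_nonneg)
    (eventually_nhdsWithin_of_forall hbound) hlim)

theorem tendsto_integral_kernel_mul_sub (hψ : IsPsiScale ψ ψ' b) {β : ℝ} (hβ0 : 0 < β)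
    {G : ℝ → ℝ → ℝ} (hG : ContinuousOn (Function.uncurry G) (Icc 0 b ×ˢ Icc 0 b)) {y₀ : ℝ}
    (hy₀ : y₀ ∈ Icc 0 b) :
    Tendsto (fun y => ∫ τ in (0:ℝ)..y, ψ' τ * (ψ y - ψ τ) ^ (β - 1) * (G y τ - G y₀ τ))
      (𝓝[Icc 0 b] y₀) (𝓝 0) := by
  set C := (ψ b - ψ 0) ^ β / β
  have hC : 0 ≤ C := div_nonneg
    (Real.rpow_nonneg (hψ.sub_apply_nonneg le_rfl (hy₀.1.trans hy₀.2) le_rfl) _) hβ0.le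
  rw [Metric.tendsto_nhds]
  intro ε hε
  filter_upwards [Metric.tendstoUniformlyOn_iff.1 (((isCompact_Icc.prod
    isCompact_Icc).uniformContinuousOn_of_continuous hG).tendstoUniformlyOn hy₀)
    (ε / (C + 1)) (by positivity), self_mem_nhdsWithin] with y hclose hy
  have hsub : Icc 0 y ⊆ Icc 0 b := Icc_subset_Icc le_rfl hy.2
  have hGy {x : ℝ} (hx : x ∈ Icc 0 b) : ContinuousOn (G x) (Icc 0 y) :=
    hG.comp (continuousOn_const.prodMk continuousOn_id) fun τ hτ => ⟨hx, hsub hτ⟩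
  have hbound := hψ.abs_integral_kernel_mul_le hβ0 le_rfl hy.1 le_rfl hy.2
    (f := fun τ => G y τ - G y₀ τ) ((hGy hy).sub (hGy hy₀)) (M := ε / (C + 1)) fun τ hτ => by
      rw [abs_sub_comm, ← Real.dist_eq]
      exact (hclose τ (hsub (Ioo_subset_Icc_self hτ))).le
  rw [sub_self, Real.zero_rpow hβ0.ne', sub_zero] at hbound
  have hCy : (ψ y - ψ 0) ^ β / β ≤ C := div_le_div_of_nonneg_right
    (Real.rpow_le_rpow (hψ.sub_apply_nonneg le_rfl hy.1 hy.2)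
      (by linarith [hψ.sub_apply_nonneg hy.1 hy.2 le_rfl]) hβ0.le) hβ0.le
  rw [Real.dist_0_eq_abs]
  calc _ ≤ ε / (C + 1) * ((ψ y - ψ 0) ^ β / β) := hbound
    _ ≤ ε / (C + 1) * C := by gcongr
    _ < ε := by
      rw [div_mul_eq_mul_div, div_lt_iff₀ (by positivity)]
      nlinarith

theorem continuousOn_integral_kernel_diag (hψ : IsPsiScale ψ ψ' b) {β : ℝ} (hβ0 : 0 < β)
    (hβ1 : β ≤ 1) {G : ℝ → ℝ → ℝ} (hG : ContinuousOn (Function.uncurry G) (Icc 0 b ×ˢ Icc 0 b)) :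
    ContinuousOn (fun y => ∫ τ in (0:ℝ)..y, ψ' τ * (ψ y - ψ τ) ^ (β - 1) * G y τ)
      (Icc 0 b) := by
  intro y₀ hy₀
  have hGy {y : ℝ} (hy : y ∈ Icc 0 b) : ContinuousOn (G y) (Icc 0 b) :=
    hG.comp (continuousOn_const.prodMk continuousOn_id) fun τ hτ => ⟨hy, hτ⟩
  have hlim := (hψ.tendsto_integral_kernel_mul_sub hβ0 hG hy₀).add
    (hψ.continuousOn_integral_kernel hβ0 hβ1 (hGy hy₀) y₀ hy₀)
  rw [zero_add] at hlim
  refine hlim.congr' (eventually_nhdsWithin_of_forall fun y hy => ?_)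
  have hk {f : ℝ → ℝ} (hf : ContinuousOn f (Icc 0 b)) :=
    hψ.intervalIntegrable_kernel_mul hβ0 le_rfl hy.1 le_rfl hy.2
      (hf.mono (Icc_subset_Icc le_rfl hy.2))
  simp only [mul_sub]
  rw [intervalIntegral.integral_sub (hk (hGy hy)) (hk (hGy hy₀))]
  ring

theorem continuousOn_triangle_kernel (hψ : IsPsiScale ψ ψ' b) (hψ' : ContinuousOn ψ' (Icc 0 b))
    (β γ : ℝ) {h : ℝ → ℝ} (hh : ContinuousOn h (Icc 0 b)) {z : ℝ} (hz : z ≤ b) :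
    ContinuousOn (Function.uncurry fun κ τ =>
      ψ' κ * (ψ z - ψ κ) ^ (β - 1) * (ψ' τ * (ψ κ - ψ τ) ^ (γ - 1) * h τ)) (triangle 0 z) := by
  have hfst : MapsTo Prod.fst (triangle 0 z) (Icc 0 b) := fun p hp =>
    ⟨(hp.1.trans hp.2.1).le, hp.2.2.le.trans hz⟩
  have hsnd : MapsTo Prod.snd (triangle 0 z) (Icc 0 b) := fun p hp =>
    ⟨hp.1.le, (hp.2.1.trans hp.2.2).le.trans hz⟩
  have hψc := hψ.continuousOn
  refine ((hψ'.comp continuousOn_fst hfst).mul ((continuousOn_const.sub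
    (hψc.comp continuousOn_fst hfst)).rpow_const fun p hp => Or.inl ?_)).mul
    (((hψ'.comp continuousOn_snd hsnd).mul (((hψc.comp continuousOn_fst hfst).sub
    (hψc.comp continuousOn_snd hsnd)).rpow_const fun p hp => Or.inl ?_)).mul
    (hh.comp continuousOn_snd hsnd))
  · exact (hψ.sub_apply_pos (hp.1.trans hp.2.1).le hp.2.2 hz).ne'
  · exact (hψ.sub_apply_pos hp.1.le hp.2.1 (hp.2.2.le.trans hz)).ne'

theorem integrableOn_triangle_kernel (hψ : IsPsiScale ψ ψ' b) (hψ' : ContinuousOn ψ' (Icc 0 b))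
    {β γ : ℝ} (hβ : 0 < β) (hγ : 0 < γ) {h : ℝ → ℝ} (hh : ContinuousOn h (Icc 0 b)) {z : ℝ}
    (hz : z ∈ Icc 0 b) :
    IntegrableOn (Function.uncurry fun κ τ =>
      ψ' κ * (ψ z - ψ κ) ^ (β - 1) * (ψ' τ * (ψ κ - ψ τ) ^ (γ - 1) * h τ)) (triangle 0 z) := by
  obtain ⟨M, hM⟩ := isCompact_Icc.exists_bound_of_continuousOn hh
  refine integrableOn_triangle (hψ.continuousOn_triangle_kernel hψ' β γ hh hz.2)
    (g := fun κ => ψ' κ * (ψ z - ψ κ) ^ (β - 1) * (M * ((ψ κ - ψ 0) ^ γ / γ))) ?_ ?_ ?_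
  · intro κ hκ
    exact ((hψ.intervalIntegrable_kernel_mul hγ le_rfl hκ.1.le le_rfl (hκ.2.le.trans hz.2)
      (hh.mono (Icc_subset_Icc le_rfl (hκ.2.le.trans hz.2)))).1.mono_set
      Ioo_subset_Ioc_self).const_mul _
  · refine (hψ.intervalIntegrable_kernel_mul hβ le_rfl hz.1 le_rfl hz.2 ?_).1.mono_set
      Ioo_subset_Ioc_self
    exact continuousOn_const.mul ((((hψ.continuousOn.mono (Icc_subset_Icc le_rfl hz.2)).sub
      continuousOn_const).rpow_const fun _ _ => Or.inr hγ.le).div_const γ)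
  · intro κ hκ
    have hκb : κ ≤ b := hκ.2.le.trans hz.2
    have hc := hψ.kernel_nonneg β hκ.1.le hκ.2.le hz.2
    have hk := hψ.intervalIntegrable_kernel_mul hγ le_rfl hκ.1.le le_rfl hκb
      (f := fun _ => M) continuousOn_const
    calc ∫ τ in Ioo 0 κ, ‖ψ' κ * (ψ z - ψ κ) ^ (β - 1) * (ψ' τ * (ψ κ - ψ τ) ^ (γ - 1) * h τ)‖
        ≤ ∫ τ in Ioo 0 κ, ψ' κ * (ψ z - ψ κ) ^ (β - 1) * (ψ' τ * (ψ κ - ψ τ) ^ (γ - 1) * M) := by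
          refine setIntegral_mono_on ?_ ((hk.1.mono_set Ioo_subset_Ioc_self).const_mul _)
            measurableSet_Ioo fun τ hτ => ?_
          · exact (((hψ.intervalIntegrable_kernel_mul hγ le_rfl hκ.1.le le_rfl hκb
              (hh.mono (Icc_subset_Icc le_rfl hκb))).1.mono_set Ioo_subset_Ioc_self).const_mul
              _).norm
          · have hk' := hψ.kernel_nonneg γ hτ.1.le hτ.2.le hκb
            rw [norm_mul, Real.norm_of_nonneg hc, norm_mul, Real.norm_of_nonneg hk']
            gcongr
            exact hM τ ⟨hτ.1.le, hτ.2.le.trans hκb⟩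
      _ = ψ' κ * (ψ z - ψ κ) ^ (β - 1) * (M * ((ψ κ - ψ 0) ^ γ / γ)) := by
          rw [integral_const_mul, ← integral_Ioc_eq_integral_Ioo,
            ← intervalIntegral.integral_of_le hκ.1.le, intervalIntegral.integral_mul_const,
            hψ.integral_kernel hγ le_rfl hκ.1.le le_rfl hκb, sub_self,
            Real.zero_rpow hγ.ne', sub_zero, mul_comm M]

theorem psiInt_psiInt (hψ : IsPsiScale ψ ψ' b) (hψ' : ContinuousOn ψ' (Icc 0 b)) {β γ : ℝ}
    (hβ : 0 < β) (hγ : 0 < γ) {h : ℝ → ℝ} (hh : ContinuousOn h (Icc 0 b)) {z : ℝ}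
    (hz : z ∈ Icc 0 b) :
    psiInt β ψ ψ' (psiInt γ ψ ψ' h) z = psiInt (β + γ) ψ ψ' h z := by
  have hswap := integral_integral_swap_triangle
    (hψ.integrableOn_triangle_kernel hψ' hβ hγ hh hz)
  have hinner : ∫ κ in (0:ℝ)..z, ψ' κ * (ψ z - ψ κ) ^ (β - 1) * psiInt γ ψ ψ' h κ =
      1 / Real.Gamma γ * ∫ κ in Ioo 0 z, ∫ τ in Ioo 0 κ,
        ψ' κ * (ψ z - ψ κ) ^ (β - 1) * (ψ' τ * (ψ κ - ψ τ) ^ (γ - 1) * h τ) := by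
    rw [intervalIntegral.integral_of_le hz.1, integral_Ioc_eq_integral_Ioo,
      ← integral_const_mul]
    refine setIntegral_congr_fun measurableSet_Ioo fun κ hκ => ?_
    rw [psiInt, intervalIntegral.integral_of_le hκ.1.le, integral_Ioc_eq_integral_Ioo,
      integral_const_mul]
    ring
  have houter : ∫ τ in Ioo 0 z, ∫ κ in Ioo τ z,
      ψ' κ * (ψ z - ψ κ) ^ (β - 1) * (ψ' τ * (ψ κ - ψ τ) ^ (γ - 1) * h τ) =
      Real.Gamma β * Real.Gamma γ / Real.Gamma (β + γ) *
        ∫ τ in (0:ℝ)..z, ψ' τ * (ψ z - ψ τ) ^ (β + γ - 1) * h τ := by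
    rw [intervalIntegral.integral_of_le hz.1, integral_Ioc_eq_integral_Ioo,
      ← integral_const_mul]
    refine setIntegral_congr_fun measurableSet_Ioo fun τ hτ => ?_
    have hbeta := hψ.integral_beta_kernel hβ hγ hτ.1.le hτ.2 hz.2
    rw [intervalIntegral.integral_of_le hτ.2.le, integral_Ioc_eq_integral_Ioo] at hbeta
    have hfactor : (fun κ => ψ' κ * (ψ z - ψ κ) ^ (β - 1) * (ψ' τ * (ψ κ - ψ τ) ^ (γ - 1) * h τ))
        = fun κ => ψ' τ * h τ * (ψ' κ * ((ψ z - ψ κ) ^ (β - 1) * (ψ κ - ψ τ) ^ (γ - 1))) := by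
      funext κ
      ring
    rw [hfactor, integral_const_mul, hbeta]
    ring
  have hΓβ := (Real.Gamma_pos_of_pos hβ).ne'
  have hΓγ := (Real.Gamma_pos_of_pos hγ).ne'
  rw [psiInt, hinner, hswap, houter, psiInt]
  field_simp

theorem continuousOn_psiInt_diag (hψ : IsPsiScale ψ ψ' b) {β : ℝ} (hβ0 : 0 < β) (hβ1 : β ≤ 1)
    {G : ℝ → ℝ → ℝ} (hG : ContinuousOn (Function.uncurry G) (Icc 0 b ×ˢ Icc 0 b)) :
    ContinuousOn (fun y => psiInt β ψ ψ' (G y) y) (Icc 0 b) :=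
  continuousOn_const.mul (hψ.continuousOn_integral_kernel_diag hβ0 hβ1 hG)

theorem continuousOn_psiCaputo (hψ : IsPsiScale ψ ψ' b) (hψ' : ContinuousOn ψ' (Icc 0 b))
    {α : ℝ} (hα0 : 0 < α) (hα1 : α < 1) {v' : ℝ → ℝ} (hv' : ContinuousOn v' (Icc 0 b)) :
    ContinuousOn (psiCaputo α ψ ψ' v') (Icc 0 b) := by
  rw [psiCaputo_eq_psiInt]
  exact hψ.continuousOn_psiInt_diag (G := fun _ τ => v' τ / ψ' τ) (by linarith) (by linarith)
    ((hv'.div hψ' fun x hx => (hψ.deriv_pos x hx).ne').comp continuousOn_snd fun p hp => hp.2)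

theorem psiInt_psiCaputo (hψ : IsPsiScale ψ ψ' b) (hψ' : ContinuousOn ψ' (Icc 0 b)) {α : ℝ}
    (hα0 : 0 < α) (hα1 : α < 1) {v v' : ℝ → ℝ}
    (hv : ∀ z ∈ Icc 0 b, HasDerivWithinAt v (v' z) (Icc 0 b) z) (hv' : ContinuousOn v' (Icc 0 b))
    {z : ℝ} (hz : z ∈ Icc 0 b) :
    psiInt α ψ ψ' (psiCaputo α ψ ψ' v') z = v z - v 0 := by
  have hsub : Icc 0 z ⊆ Icc 0 b := Icc_subset_Icc le_rfl hz.2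
  rw [psiCaputo_eq_psiInt, hψ.psiInt_psiInt (h := fun κ => v' κ / ψ' κ) hψ' hα0 (by linarith)
    (hv'.div hψ' fun x hx => (hψ.deriv_pos x hx).ne') hz, add_sub_cancel, psiInt_one]
  rw [intervalIntegral.integral_congr fun x hx => mul_div_cancel₀ (v' x)
    (hψ.deriv_pos x (hsub (uIcc_of_le hz.1 ▸ hx))).ne']
  refine intervalIntegral.integral_eq_sub_of_hasDerivAt_of_le hz.1
    (fun x hx => (hv x (hsub hx)).continuousWithinAt.mono hsub) (fun x hx => ?_)
    (hv'.mono (uIcc_of_le hz.1 ▸ hsub)).intervalIntegrable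
  exact (hv x (hsub (Ioo_subset_Icc_self hx))).hasDerivAt
    (Icc_mem_nhds hx.1 (hx.2.trans_le hz.2))

theorem eqOn_of_psiInt_eq (hψ : IsPsiScale ψ ψ' b) (hψ' : ContinuousOn ψ' (Icc 0 b)) (hb : 0 < b)
    {α : ℝ} (hα0 : 0 < α) (hα1 : α < 1) {p q : ℝ → ℝ} (hp : ContinuousOn p (Icc 0 b))
    (hq : ContinuousOn q (Icc 0 b)) (h : ∀ z ∈ Icc 0 b, psiInt α ψ ψ' p z = psiInt α ψ ψ' q z) :
    EqOn p q (Icc 0 b) := by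
  have hint : ∀ z ∈ Icc 0 b, ∫ x in (0:ℝ)..z, ψ' x * p x = ∫ x in (0:ℝ)..z, ψ' x * q x := by
    intro z hz
    rw [← psiInt_one, ← psiInt_one, show (1:ℝ) = 1 - α + α by ring,
      ← hψ.psiInt_psiInt hψ' (by linarith) hα0 hp hz,
      ← hψ.psiInt_psiInt hψ' (by linarith) hα0 hq hz]
    exact psiInt_congr hz.1 fun y hy => h y (Icc_subset_Icc le_rfl hz.2 hy)
  exact fun z hz => mul_left_cancel₀ (hψ.deriv_pos z hz).ne'
    (eqOn_of_integral_eq hb (hψ'.mul hp) (hψ'.mul hq) hint hz)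

end IsPsiScale

/-- Equivalence between the ψ-Caputo fractional integro-differential problem
`N^{α,ψ} v (z) = F(z, v(z), I^{α,ψ} H(z, ·, N^{α,ψ} v(·))(z))`, `v(0) = v₀`,
and the corresponding fractional integral equation. -/
theorem caputo_problem_iff_integral_eq (α b : ℝ) (hα0 : 0 < α) (hα1 : α < 1) (hb : 0 < b)
    (ψ ψ' : ℝ → ℝ)
    (hψ_mono : StrictMonoOn ψ (Set.Icc 0 b))
    (hψ_deriv : ∀ z ∈ Set.Icc 0 b, HasDerivWithinAt ψ (ψ' z) (Set.Icc 0 b) z)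
    (hψ'_cont : ContinuousOn ψ' (Set.Icc 0 b))
    (hψ'_pos : ∀ z ∈ Set.Icc 0 b, 0 < ψ' z)
    (F : ℝ → ℝ → ℝ → ℝ) (H : ℝ → ℝ → ℝ → ℝ)
    (hF_cont : ContinuousOn (fun p : ℝ × ℝ × ℝ => F p.1 p.2.1 p.2.2)
      (Set.Icc 0 b ×ˢ (Set.univ : Set ℝ) ×ˢ (Set.univ : Set ℝ)))
    (hH_cont : ContinuousOn (fun p : ℝ × ℝ × ℝ => H p.1 p.2.1 p.2.2)
      (Set.Icc 0 b ×ˢ Set.Icc 0 b ×ˢ (Set.univ : Set ℝ)))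
    (v₀ : ℝ) (v v' : ℝ → ℝ)
    (hv_deriv : ∀ z ∈ Set.Icc 0 b, HasDerivWithinAt v (v' z) (Set.Icc 0 b) z)
    (hv'_cont : ContinuousOn v' (Set.Icc 0 b)) :
    ((∀ z ∈ Set.Icc 0 b,
        psiCaputo α ψ ψ' v' z =
          F z (v z) (psiInt α ψ ψ' (fun τ => H z τ (psiCaputo α ψ ψ' v' τ)) z)) ∧
      v 0 = v₀) ↔
    (∀ z ∈ Set.Icc 0 b,
        v z = v₀ + psiInt α ψ ψ'
          (fun κ => F κ (v κ) (psiInt α ψ ψ' (fun τ => H κ τ (psiCaputo α ψ ψ' v' τ)) κ)) z) := by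
  have hψ : IsPsiScale ψ ψ' b := ⟨hψ_mono, hψ_deriv, hψ'_pos⟩
  have hv_cont : ContinuousOn v (Icc 0 b) := fun z hz => (hv_deriv z hz).continuousWithinAt
  have hN := hψ.continuousOn_psiCaputo hψ'_cont hα0 hα1 hv'_cont
  have hrhs : ContinuousOn
      (fun κ => F κ (v κ) (psiInt α ψ ψ' (fun τ => H κ τ (psiCaputo α ψ ψ' v' τ)) κ))
      (Icc 0 b) := by
    have hX := hψ.continuousOn_psiInt_diag hα0 hα1.le
      (G := fun κ τ => H κ τ (psiCaputo α ψ ψ' v' τ))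
      (hH_cont.comp (continuousOn_fst.prodMk (continuousOn_snd.prodMk
        (hN.comp continuousOn_snd fun p hp => hp.2))) fun p hp => ⟨hp.1, hp.2, trivial⟩)
    exact hF_cont.comp (continuousOn_id.prodMk (hv_cont.prodMk hX))
      fun κ hκ => ⟨hκ, trivial, trivial⟩
  have hIN : ∀ z ∈ Icc 0 b, psiInt α ψ ψ' (psiCaputo α ψ ψ' v') z = v z - v 0 :=
    fun z hz => hψ.psiInt_psiCaputo hψ'_cont hα0 hα1 hv_deriv hv'_cont hz
  constructor
  · rintro ⟨hprob, rfl⟩ z hz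
    rw [psiInt_congr hz.1 fun κ hκ => (hprob κ (Icc_subset_Icc le_rfl hz.2 hκ)).symm, hIN z hz]
    ring
  · intro hie
    have hv0 : v 0 = v₀ := by simpa [psiInt] using hie 0 ⟨le_rfl, hb.le⟩
    refine ⟨fun z hz => hψ.eqOn_of_psiInt_eq hψ'_cont hb hα0 hα1 hN hrhs (fun y hy => ?_) hz, hv0⟩
    rw [hIN y hy, hv0]
    linarith [hie y hy]
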